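/- Let (E,h) be a Hermitian holomorphic vector bundle over a compact Kähler manifold (X,ω) of dimension n, and let α be an E-valued (n,0)-form with H(α)=0. Then the (n-1,1)-form ∇''(∇'* G' α) is primitive, i.e. ω ∧ ∇''(∇'* G' α) = 0. -/

import Mathlib

/-!
`ω ∧ ∇''G'α` is an `(n+1,2)`-form, hence zero.  Feeding `∇''G'α` into the Kähler identity
`[∇'*, L_ω] = -√-1 ∇''` and using `∇''² = 0` then gives `L_ω ∇'*∇''G'α = 0`, and `∇''∇'* = -∇'*∇''`
turns this into `L_ω ∇''∇'*G'α = 0`.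
-/

/-- The space of `E`-valued forms on a compact Kähler manifold, with the operators of
Hodge theory for the Chern connection `∇ = ∇' + ∇''`. -/
structure HodgeSetting (V : Type*) [AddCommGroup V] [Module ℂ V] where
  /-- complex dimension of `X` -/
  n : ℕ
  /-- projection onto the space of forms of bidegree `(p,q)` -/
  P : ℤ → ℤ → V →ₗ[ℂ] V
  /-- `∇'` -/
  d1 : V →ₗ[ℂ] V
  /-- `∇'' = ∂̄` -/
  d2 : V →ₗ[ℂ] V
  /-- `∇'*` -/
  d1s : V →ₗ[ℂ] V
  /-- `∇''*` -/
  d2s : V →ₗ[ℂ] V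
  /-- the Lefschetz operator `L_ω = ω ∧ ·` -/
  L : V →ₗ[ℂ] V
  /-- harmonic projection with respect to `Δ''` -/
  H2 : V →ₗ[ℂ] V
  /-- `G'`, the Green operator of `Δ'` -/
  G1 : V →ₗ[ℂ] V

namespace HodgeSetting

variable {V : Type*} [AddCommGroup V] [Module ℂ V] (S : HodgeSetting V)

/-- `Δ' = ∇'∇'* + ∇'*∇'` -/
def Lap1 : V →ₗ[ℂ] V := S.d1 ∘ₗ S.d1s + S.d1s ∘ₗ S.d1

end HodgeSetting

namespace HodgeSetting

variable {V : Type*} [AddCommGroup V] [Module ℂ V] (S : HodgeSetting V)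

theorem L_d2_eq_zero_of_bidegree
    (d2_deg : ∀ (p q : ℤ) (x : V), S.P p q x = x → S.P p (q + 1) (S.d2 x) = S.d2 x)
    (L_deg : ∀ (p q : ℤ) (x : V), S.P p q x = x → S.P (p + 1) (q + 1) (S.L x) = S.L x)
    (vanish : ∀ (p q : ℤ) (x : V), S.P p q x = x → (S.n : ℤ) < p → x = 0)
    {p q : ℤ} (hp : (S.n : ℤ) ≤ p) {x : V} (hx : S.P p q x = x) :
    S.L (S.d2 x) = 0 :=
  vanish (p + 1) (q + 1 + 1) _ (L_deg _ _ _ (d2_deg _ _ _ hx)) (by omega)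

theorem L_d2_d1s_eq_zero_of_L_d2_eq_zero
    (kahler_id : ∀ x : V, S.d1s (S.L x) - S.L (S.d1s x) = -(Complex.I) • S.d2 x)
    (anticomm : ∀ x : V, S.d2 (S.d1s x) = - S.d1s (S.d2 x))
    (d2_sq : ∀ x : V, S.d2 (S.d2 x) = 0)
    {y : V} (hy : S.L (S.d2 y) = 0) :
    S.L (S.d2 (S.d1s y)) = 0 := by
  have h := kahler_id (S.d2 y)
  rw [hy, d2_sq, smul_zero, map_zero, zero_sub, neg_eq_zero] at h
  rw [anticomm, map_neg, h, neg_zero]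

end HodgeSetting

theorem primitive_of_dbar_of_solution_general
    {V : Type*} [AddCommGroup V] [Module ℂ V] (S : HodgeSetting V)
    -- the Kähler–Hodge identity `[∇'*, L_ω] = -√-1 ∇''`
    (kahler_id : ∀ x : V, S.d1s (S.L x) - S.L (S.d1s x) = -(Complex.I) • S.d2 x)
    -- `∇''∇'* = -∇'*∇''` (a consequence of the Kähler identities)
    (anticomm : ∀ x : V, S.d2 (S.d1s x) = - S.d1s (S.d2 x))
    -- `∇''² = 0`
    (d2_sq : ∀ x : V, S.d2 (S.d2 x) = 0)
    -- degree behaviour of the operators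
    (G1_deg : ∀ (p q : ℤ) (x : V), S.P p q x = x → S.P p q (S.G1 x) = S.G1 x)
    (d2_deg : ∀ (p q : ℤ) (x : V), S.P p q x = x → S.P p (q + 1) (S.d2 x) = S.d2 x)
    (L_deg : ∀ (p q : ℤ) (x : V), S.P p q x = x → S.P (p + 1) (q + 1) (S.L x) = S.L x)
    -- forms of holomorphic degree greater than `n` vanish
    (vanish : ∀ (p q : ℤ) (x : V), S.P p q x = x → (S.n : ℤ) < p → x = 0)
    -- `α` is an `(n,0)`-form with vanishing `Δ''`-harmonic part
    (α : V) (hα : S.P S.n 0 α = α) :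
    S.L (S.d2 (S.d1s (S.G1 α))) = 0 :=
  S.L_d2_d1s_eq_zero_of_L_d2_eq_zero kahler_id anticomm d2_sq <|
    S.L_d2_eq_zero_of_bidegree d2_deg L_deg vanish le_rfl (G1_deg _ _ _ hα)

/-- For an `E`-valued `(n,0)`-form `α` with vanishing harmonic part,
`∇''(∇'* G' α)` is a primitive `(n-1,1)`-form: `ω ∧ ∇''(∇'* G' α) = 0`. -/
theorem primitive_of_dbar_of_solution
    {V : Type*} [AddCommGroup V] [Module ℂ V] (S : HodgeSetting V)
    -- the Kähler–Hodge identity `[∇'*, L_ω] = -√-1 ∇''`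
    (kahler_id : ∀ x : V, S.d1s (S.L x) - S.L (S.d1s x) = -(Complex.I) • S.d2 x)
    -- `∇''∇'* = -∇'*∇''` (a consequence of the Kähler identities)
    (anticomm : ∀ x : V, S.d2 (S.d1s x) = - S.d1s (S.d2 x))
    -- `∇''² = 0`
    (d2_sq : ∀ x : V, S.d2 (S.d2 x) = 0)
    -- the Green operator commutes with `∇''`
    (G1_d2 : ∀ x : V, S.G1 (S.d2 x) = S.d2 (S.G1 x))
    -- degree behaviour of the operators
    (G1_deg : ∀ (p q : ℤ) (x : V), S.P p q x = x → S.P p q (S.G1 x) = S.G1 x)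
    (d2_deg : ∀ (p q : ℤ) (x : V), S.P p q x = x → S.P p (q + 1) (S.d2 x) = S.d2 x)
    (d1s_deg : ∀ (p q : ℤ) (x : V), S.P p q x = x → S.P (p - 1) q (S.d1s x) = S.d1s x)
    (L_deg : ∀ (p q : ℤ) (x : V), S.P p q x = x → S.P (p + 1) (q + 1) (S.L x) = S.L x)
    -- forms of holomorphic degree greater than `n` vanish
    (vanish : ∀ (p q : ℤ) (x : V), S.P p q x = x → (S.n : ℤ) < p → x = 0)
    -- `α` is an `(n,0)`-form with vanishing `Δ''`-harmonic part
    (α : V) (hα : S.P S.n 0 α = α) (hharm : S.H2 α = 0) :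
    S.L (S.d2 (S.d1s (S.G1 α))) = 0 :=
  primitive_of_dbar_of_solution_general S kahler_id anticomm d2_sq G1_deg d2_deg L_deg vanish α hα
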